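/- Fix m ∈ M with ‖m‖₁ > 0, and let t_m = sup_{s' ∈ S} D_m(s') / 2. A function c ∈ M minimizes soft-Dice, i.e., SD_m(c) = inf_{c' ∈ M} SD_m(c'), if and only if, for λ-almost every ω ∈ Ω: c(ω) = 1 when m(ω) > t_m, and c(ω) = 0 when m(ω) < t_m (c(ω) may take any value in [0,1] when m(ω) = t_m). -/

import Mathlib

open MeasureTheory Real Set
open scoped ENNReal

noncomputable section

/-- The unit cube `Ω = [0,1]^n` in `ℝ^n`. -/
def cube (n : ℕ) : Set (EuclideanSpace ℝ (Fin n)) :=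
  (WithLp.ofLp : EuclideanSpace ℝ (Fin n) → (Fin n → ℝ)) ⁻¹' Set.univ.pi fun _ => Set.Icc (0:ℝ) 1

/-- Lebesgue measure restricted to the unit cube. -/
def lam (n : ℕ) : Measure (EuclideanSpace ℝ (Fin n)) := volume.restrict (cube n)

/-- `S`: measurable functions `Ω → {0,1}` (as real-valued functions on `ℝ^n`). -/
def IsSeg {n : ℕ} (s : EuclideanSpace ℝ (Fin n) → ℝ) : Prop :=
  Measurable s ∧ ∀ ω, s ω = 0 ∨ s ω = 1

/-- `M`: measurable functions `Ω → [0,1]`. -/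
def IsSoft {n : ℕ} (m : EuclideanSpace ℝ (Fin n) → ℝ) : Prop :=
  Measurable m ∧ ∀ ω, m ω ∈ Set.Icc (0:ℝ) 1

/-- `‖f‖₁ = ∫_Ω |f| dλ`. -/
def l1 {n : ℕ} (f : EuclideanSpace ℝ (Fin n) → ℝ) : ℝ := ∫ ω, |f ω| ∂(lam n)

/-- Accuracy `A_m(s)`. -/
def accur {n : ℕ} (m s : EuclideanSpace ℝ (Fin n) → ℝ) : ℝ :=
  ∫ ω, (s ω * m ω + (1 - s ω) * (1 - m ω)) ∂(lam n)

/-- Dice `D_m(s)`. -/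
def dice {n : ℕ} (m s : EuclideanSpace ℝ (Fin n) → ℝ) : ℝ :=
  2 * (∫ ω, s ω * m ω ∂(lam n)) / (l1 s + l1 m)

/-- soft-Dice `SD_m(c)`. -/
def sdice {n : ℕ} (m c : EuclideanSpace ℝ (Fin n) → ℝ) : ℝ :=
  1 - 2 * (∫ ω, c ω * m ω ∂(lam n)) / (l1 c + l1 m)

/-- pointwise cross-entropy term `-(m log c)` in `[0,∞]`, with `0·log 0 = 0`, `log 0 = -∞`. -/
def ceTerm (m c : ℝ) : ℝ≥0∞ :=
  if m = 0 then 0 else if c = 0 then ⊤ else ENNReal.ofReal (-(m * Real.log c))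

/-- cross-entropy `CE_m(c) ∈ [0,∞]`. -/
def crossEnt {n : ℕ} (m c : EuclideanSpace ℝ (Fin n) → ℝ) : ℝ≥0∞ :=
  ∫⁻ ω, (ceTerm (m ω) (c ω) + ceTerm (1 - m ω) (1 - c ω)) ∂(lam n)

/-- the thresholded segmentation `I_{[t,1]} ∘ c`. -/
def thresh {n : ℕ} (t : ℝ) (c : EuclideanSpace ℝ (Fin n) → ℝ) :
    EuclideanSpace ℝ (Fin n) → ℝ := fun ω => if t ≤ c ω then 1 else 0

/-- `sup_{s' ∈ S} D_m(s')`. -/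
def supDice {n : ℕ} (m : EuclideanSpace ℝ (Fin n) → ℝ) : ℝ :=
  ⨆ s' : {s' : EuclideanSpace ℝ (Fin n) → ℝ // IsSeg s'}, dice m s'.1

/-- the centered isotropic Gaussian density `p_{σ²}` on `ℝ^n`. -/
def pdens (n : ℕ) (σ2 : ℝ) (x : EuclideanSpace ℝ (Fin n)) : ℝ :=
  (2 * π * σ2) ^ (-(n:ℝ)/2) * Real.exp (-‖x‖^2 / (2 * σ2))

open scoped NNReal

namespace SDAux
variable {n : ℕ}

lemma isCompact_cube (n : ℕ) : IsCompact (cube n) :=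
  (PiLp.homeomorph 2 fun _ : Fin n => ℝ).isCompact_preimage.2 (isCompact_univ_pi fun _ => isCompact_Icc)

instance : IsFiniteMeasure (lam n) := by
  constructor
  rw [lam, Measure.restrict_apply_univ]
  exact (isCompact_cube n).measure_lt_top

lemma integrable_of_bound (f : EuclideanSpace ℝ (Fin n) → ℝ) (C : ℝ)
    (hf : Measurable f) (h : ∀ ω, |f ω| ≤ C) : Integrable f (lam n) :=
  (integrable_const C).mono' hf.aestronglyMeasurable (ae_of_all _ fun ω => by
    simpa using h ω)

lemma seg_soft {s : EuclideanSpace ℝ (Fin n) → ℝ} (hs : IsSeg s) : IsSoft s :=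
  ⟨hs.1, fun ω => by rcases hs.2 ω with h | h <;> simp [h]⟩

lemma soft_int {f : EuclideanSpace ℝ (Fin n) → ℝ} (hf : IsSoft f) :
    Integrable f (lam n) :=
  integrable_of_bound f 1 hf.1 fun ω => abs_le.2 ⟨by linarith [(hf.2 ω).1], (hf.2 ω).2⟩

lemma l1_soft {f : EuclideanSpace ℝ (Fin n) → ℝ} (hf : IsSoft f) :
    l1 f = ∫ ω, f ω ∂(lam n) :=
  integral_congr_ae (ae_of_all _ fun ω => abs_of_nonneg (hf.2 ω).1)

lemma l1_soft_nonneg {f : EuclideanSpace ℝ (Fin n) → ℝ} (hf : IsSoft f) : 0 ≤ l1 f :=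
  integral_nonneg fun ω => abs_nonneg _

/-- the map `t ↦ ∫ (m - t)⁺`. -/
def Jf (n : ℕ) (m : EuclideanSpace ℝ (Fin n) → ℝ) (t : ℝ) : ℝ :=
  ∫ ω, max (m ω - t) 0 ∂(lam n)

lemma Jf_int {m : EuclideanSpace ℝ (Fin n) → ℝ} (hm : IsSoft m) (t : ℝ) :
    Integrable (fun ω => max (m ω - t) 0) (lam n) := by
  refine integrable_of_bound _ (1 + |t|) ((hm.1.sub measurable_const).max measurable_const) ?_
  intro ω
  rw [abs_of_nonneg (le_max_right _ _)]
  rcases le_total (m ω - t) 0 with h | h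
  · simp only [max_eq_right h]; positivity
  · rw [max_eq_left h]
    have := (hm.2 ω).2
    have := abs_nonneg t
    have := neg_abs_le t
    linarith

lemma mul_sub_int {f m : EuclideanSpace ℝ (Fin n) → ℝ} (hf : IsSoft f) (hm : IsSoft m)
    (t : ℝ) : Integrable (fun ω => f ω * (m ω - t)) (lam n) := by
  refine integrable_of_bound _ (1 + |t|) (hf.1.mul (hm.1.sub measurable_const)) ?_
  intro ω
  rw [abs_mul]
  have h1 : |f ω| ≤ 1 := abs_le.2 ⟨by linarith [(hf.2 ω).1], (hf.2 ω).2⟩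
  have h2 : |m ω - t| ≤ 1 + |t| := by
    have h4 := neg_abs_le t
    have h5 := le_abs_self t
    have h6 := (hm.2 ω).1
    have h7 := (hm.2 ω).2
    rw [abs_le]; constructor <;> [linarith; linarith]
  calc |f ω| * |m ω - t| ≤ 1 * (1 + |t|) := by
        apply mul_le_mul h1 h2 (abs_nonneg _) zero_le_one
    _ = 1 + |t| := one_mul _

lemma mul_int {f m : EuclideanSpace ℝ (Fin n) → ℝ} (hf : IsSoft f) (hm : IsSoft m) :
    Integrable (fun ω => f ω * m ω) (lam n) := by
  simpa using mul_sub_int hf hm 0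

lemma Jf_cont {m : EuclideanSpace ℝ (Fin n) → ℝ} (hm : IsSoft m) :
    Continuous (Jf n m) := by
  set K : ℝ≥0 := ((lam n) univ).toNNReal with hK
  apply LipschitzWith.continuous (K := K)
  apply LipschitzWith.of_dist_le_mul
  intro a b
  rw [Real.dist_eq, Real.dist_eq]
  have hint : ∀ t : ℝ, Integrable (fun ω => max (m ω - t) 0) (lam n) := Jf_int hm
  have : Jf n m a - Jf n m b = ∫ ω, (max (m ω - a) 0 - max (m ω - b) 0) ∂(lam n) :=
    (integral_sub (hint a) (hint b)).symm
  rw [this]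
  have h1 : |∫ ω, (max (m ω - a) 0 - max (m ω - b) 0) ∂(lam n)| ≤
      ∫ ω, |max (m ω - a) 0 - max (m ω - b) 0| ∂(lam n) :=
    by simpa [Real.norm_eq_abs] using
      norm_integral_le_integral_norm (μ := lam n)
        (f := fun ω => max (m ω - a) 0 - max (m ω - b) 0)
  refine h1.trans ?_
  have h2 : ∫ ω, |max (m ω - a) 0 - max (m ω - b) 0| ∂(lam n) ≤
      ∫ _ω, |a - b| ∂(lam n) := by
    apply integral_mono ((hint a).sub (hint b)).abs (integrable_const _)
    intro ω
    have := abs_max_sub_max_le_abs (m ω - a) (m ω - b) 0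
    calc |max (m ω - a) 0 - max (m ω - b) 0| ≤ |(m ω - a) - (m ω - b)| := this
      _ = |b - a| := by ring_nf
      _ = |a - b| := abs_sub_comm _ _
  refine h2.trans ?_
  rw [integral_const, smul_eq_mul]
  rfl


lemma ptwise_le {a b t : ℝ} (ha : a ∈ Set.Icc (0:ℝ) 1) :
    a * (b - t) ≤ max (b - t) 0 := by
  rcases le_total (b - t) 0 with h | h
  · exact (mul_nonpos_of_nonneg_of_nonpos ha.1 h).trans (le_max_right _ _)
  · calc a * (b - t) ≤ 1 * (b - t) := mul_le_mul_of_nonneg_right ha.2 h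
      _ = b - t := one_mul _
      _ ≤ max (b - t) 0 := le_max_left _ _

lemma ptwise_iff {a b t : ℝ} (ha : a ∈ Set.Icc (0:ℝ) 1) :
    max (b - t) 0 - a * (b - t) = 0 ↔ ((t < b → a = 1) ∧ (b < t → a = 0)) := by
  rcases lt_trichotomy b t with h | h | h
  · rw [max_eq_right (by linarith)]
    constructor
    · intro he
      refine ⟨fun h' => absurd h' (by linarith), fun _ => ?_⟩
      have h0 : a * (b - t) = 0 := by linarith
      rcases mul_eq_zero.1 h0 with h2 | h2
      · exact h2
      · exact absurd h2 (sub_ne_zero.2 (ne_of_lt h))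
    · rintro ⟨_, h2⟩; rw [h2 h]; ring
  · subst h; simp
  · rw [max_eq_left (by linarith)]
    constructor
    · intro he
      refine ⟨fun _ => ?_, fun h' => absurd h' (by linarith)⟩
      have h0 : (1 - a) * (b - t) = 0 := by linear_combination he
      rcases mul_eq_zero.1 h0 with h2 | h2
      · linarith
      · exact absurd h2 (sub_ne_zero.2 (ne_of_gt h))
    · rintro ⟨h1, _⟩; rw [h1 h]; ring

end SDAux

/-- Optimal solutions to soft-Dice: `c` minimizes `SD_m` over `M` iff λ-a.e. `c(ω) = 1`
when `m(ω) > t_m` and `c(ω) = 0` when `m(ω) < t_m`, where `t_m = sup_{s'∈S} D_m(s')/2`. -/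
theorem sdice_minimizer_iff
    (n : ℕ) (hn : 1 ≤ n)
    (m : EuclideanSpace ℝ (Fin n) → ℝ) (hm : IsSoft m) (hm1 : 0 < l1 m)
    (c : EuclideanSpace ℝ (Fin n) → ℝ) (hc : IsSoft c) :
    sdice m c = (⨅ c' : {c' : EuclideanSpace ℝ (Fin n) → ℝ // IsSoft c'}, sdice m c'.1)
      ↔ ∀ᵐ ω ∂(lam n),
          (supDice m / 2 < m ω → c ω = 1) ∧ (m ω < supDice m / 2 → c ω = 0) := by
  classical
  have hμ : 0 < ∫ ω, m ω ∂(lam n) := by rwa [SDAux.l1_soft hm] at hm1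
  set μR := ∫ ω, m ω ∂(lam n) with hμR
  -- IVT for t
  have hg : Continuous (fun t => SDAux.Jf n m t - t * μR) :=
    (SDAux.Jf_cont hm).sub (continuous_id.mul continuous_const)
  have hJ0 : SDAux.Jf n m 0 = μR := by
    unfold SDAux.Jf
    apply integral_congr_ae (ae_of_all _ fun ω => ?_)
    rw [sub_zero, max_eq_left (hm.2 ω).1]
  have hJ1 : SDAux.Jf n m 1 = 0 := by
    unfold SDAux.Jf
    rw [show (fun ω => max (m ω - 1) 0) = fun _ => (0:ℝ) from funext fun ω =>
      max_eq_right (by linarith [(hm.2 ω).2])]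
    simp
  obtain ⟨t, ht01, hteq0⟩ : ∃ t ∈ Icc (0:ℝ) 1, SDAux.Jf n m t - t * μR = 0 := by
    have him := intermediate_value_Icc' (zero_le_one (α := ℝ)) hg.continuousOn
    have h0 : (0:ℝ) ∈ Icc (SDAux.Jf n m 1 - 1 * μR) (SDAux.Jf n m 0 - 0 * μR) := by
      rw [hJ0, hJ1]
      constructor <;> [linarith; linarith]
    obtain ⟨t, ht, h⟩ := him h0
    exact ⟨t, ht, h⟩
  have hteq : SDAux.Jf n m t = t * μR := by linarith
  -- core inequality
  have key1 : ∀ f, IsSoft f → ∫ ω, f ω * (m ω - t) ∂(lam n) ≤ SDAux.Jf n m t := by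
    intro f hf
    exact integral_mono (SDAux.mul_sub_int hf hm t) (SDAux.Jf_int hm t)
      (fun ω => SDAux.ptwise_le (hf.2 ω))
  have key2 : ∀ f, IsSoft f → ∫ ω, f ω * m ω ∂(lam n)
      = (∫ ω, f ω * (m ω - t) ∂(lam n)) + t * ∫ ω, f ω ∂(lam n) := by
    intro f hf
    have hr : (fun ω => f ω * m ω) = fun ω => f ω * (m ω - t) + t * f ω := by
      funext ω; ring
    rw [hr, integral_add (SDAux.mul_sub_int hf hm t) ((SDAux.soft_int hf).const_mul t),
      integral_const_mul]
  have hnum : ∀ f, IsSoft f → 2 * ∫ ω, f ω * m ω ∂(lam n) ≤ 2 * t * (l1 f + l1 m) := by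
    intro f hf
    have h1 := key1 f hf
    rw [key2 f hf, SDAux.l1_soft hf, SDAux.l1_soft hm, ← hμR]
    nlinarith [h1, hteq]
  have hden : ∀ f : EuclideanSpace ℝ (Fin n) → ℝ, IsSoft f → 0 < l1 f + l1 m := by
    intro f hf
    have := SDAux.l1_soft_nonneg hf
    linarith
  have hsd_ge : ∀ f, IsSoft f → 1 - 2 * t ≤ sdice m f := by
    intro f hf
    have hd := hden f hf
    have h2 : 2 * (∫ ω, f ω * m ω ∂(lam n)) / (l1 f + l1 m) ≤ 2 * t := by
      rw [div_le_iff₀ hd]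
      have := hnum f hf
      linarith
    unfold sdice
    linarith
  have hd_le : ∀ s, IsSeg s → dice m s ≤ 2 * t := by
    intro s hs
    have hf := SDAux.seg_soft hs
    unfold dice
    rw [div_le_iff₀ (hden s hf)]
    have := hnum s hf
    linarith
  -- threshold segmentation
  set s0 : EuclideanSpace ℝ (Fin n) → ℝ := fun ω => if t < m ω then 1 else 0 with hs0def
  have hs0seg : IsSeg s0 := by
    constructor
    · exact Measurable.ite (measurableSet_lt measurable_const hm.1)
        measurable_const measurable_const
    · intro ω
      by_cases h : t < m ω <;> simp [hs0def, h]
  have hs0soft := SDAux.seg_soft hs0seg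
  have hs0eq : ∫ ω, s0 ω * (m ω - t) ∂(lam n) = SDAux.Jf n m t := by
    apply integral_congr_ae (ae_of_all _ fun ω => ?_)
    by_cases h : t < m ω
    · simp only [hs0def, if_pos h, one_mul]
      rw [max_eq_left (by linarith)]
    · simp only [hs0def, if_neg h, zero_mul]
      rw [max_eq_right (by linarith [not_lt.1 h])]
  have hs0num : 2 * ∫ ω, s0 ω * m ω ∂(lam n) = 2 * t * (l1 s0 + l1 m) := by
    rw [key2 s0 hs0soft, hs0eq, hteq, SDAux.l1_soft hs0soft, SDAux.l1_soft hm, ← hμR]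
    ring
  have hs0dice : dice m s0 = 2 * t := by
    unfold dice
    rw [div_eq_iff (ne_of_gt (hden s0 hs0soft))]
    exact hs0num
  have hs0sdice : sdice m s0 = 1 - 2 * t := by
    unfold sdice
    have h2 : 2 * (∫ ω, s0 ω * m ω ∂(lam n)) / (l1 s0 + l1 m) = 2 * t := by
      rw [div_eq_iff (ne_of_gt (hden s0 hs0soft))]
      exact hs0num
    rw [h2]
  -- supDice = 2t
  have hNE : Nonempty {s' : EuclideanSpace ℝ (Fin n) → ℝ // IsSeg s'} :=
    ⟨⟨fun _ => 0, measurable_const, fun _ => Or.inl rfl⟩⟩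
  have hbddA : BddAbove (Set.range fun s' : {s' : EuclideanSpace ℝ (Fin n) → ℝ // IsSeg s'} =>
      dice m s'.1) := by
    refine ⟨2 * t, ?_⟩
    rintro x ⟨s', rfl⟩
    exact hd_le s'.1 s'.2
  have hsup : supDice m = 2 * t := by
    apply le_antisymm
    · exact ciSup_le fun s' => hd_le s'.1 s'.2
    · rw [← hs0dice]
      exact le_ciSup hbddA ⟨s0, hs0seg⟩
  have hsup2 : supDice m / 2 = t := by rw [hsup]; ring
  -- infimum
  have hinf : (⨅ c' : {c' : EuclideanSpace ℝ (Fin n) → ℝ // IsSoft c'}, sdice m c'.1)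
      = 1 - 2 * t := by
    haveI : Nonempty {c' : EuclideanSpace ℝ (Fin n) → ℝ // IsSoft c'} := ⟨⟨s0, hs0soft⟩⟩
    have hbddB : BddBelow (Set.range fun c' : {c' : EuclideanSpace ℝ (Fin n) → ℝ // IsSoft c'} =>
        sdice m c'.1) := by
      refine ⟨1 - 2 * t, ?_⟩
      rintro x ⟨c', rfl⟩
      exact hsd_ge c'.1 c'.2
    apply le_antisymm
    · rw [← hs0sdice]
      exact ciInf_le hbddB ⟨s0, hs0soft⟩
    · exact le_ciInf fun c' => hsd_ge c'.1 c'.2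
  rw [hinf, hsup2]
  -- characterization
  have hchar1 : sdice m c = 1 - 2 * t ↔
      (∫ ω, c ω * (m ω - t) ∂(lam n)) = SDAux.Jf n m t := by
    unfold sdice
    rw [hteq]
    constructor
    · intro h
      have hx : 2 * (∫ ω, c ω * m ω ∂(lam n)) / (l1 c + l1 m) = 2 * t := by linarith
      rw [div_eq_iff (ne_of_gt (hden c hc))] at hx
      rw [key2 c hc, SDAux.l1_soft hc, SDAux.l1_soft hm, ← hμR] at hx
      nlinarith [hx]
    · intro h
      have hx : 2 * (∫ ω, c ω * m ω ∂(lam n)) = 2 * t * (l1 c + l1 m) := by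
        rw [key2 c hc, h, SDAux.l1_soft hc, SDAux.l1_soft hm, ← hμR]
        ring
      rw [← div_eq_iff (ne_of_gt (hden c hc))] at hx
      linarith
  rw [hchar1]
  have hintdiff : Integrable (fun ω => max (m ω - t) 0 - c ω * (m ω - t)) (lam n) :=
    (SDAux.Jf_int hm t).sub (SDAux.mul_sub_int hc hm t)
  have hsub : ∫ ω, (max (m ω - t) 0 - c ω * (m ω - t)) ∂(lam n)
      = SDAux.Jf n m t - ∫ ω, c ω * (m ω - t) ∂(lam n) :=
    integral_sub (SDAux.Jf_int hm t) (SDAux.mul_sub_int hc hm t)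
  have hzero := integral_eq_zero_iff_of_nonneg
    (fun ω => sub_nonneg.2 (SDAux.ptwise_le (hc.2 ω))) hintdiff
  constructor
  · intro h
    have h0 : ∫ ω, (max (m ω - t) 0 - c ω * (m ω - t)) ∂(lam n) = 0 := by
      rw [hsub, h]; ring
    have hae := hzero.1 h0
    filter_upwards [hae] with ω hω
    exact (SDAux.ptwise_iff (hc.2 ω)).1 (by simpa using hω)
  · intro h
    have hae : (fun ω => max (m ω - t) 0 - c ω * (m ω - t)) =ᵐ[lam n] 0 := by
      filter_upwards [h] with ω hω
      simpa using (SDAux.ptwise_iff (hc.2 ω)).2 hω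
    have h0 := hzero.2 hae
    rw [hsub] at h0
    linarith
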